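/- arXiv:1411.4162 — 3 statements merged into one kernel-verified Lean document; each statement's English description precedes it below -/
import Mathlib

section
/- (Watson's Lemma, first order.) Suppose f : (0,∞) → ℂ is absolutely integrable, f(τ) = τ^λ g(τ) with Re λ > −1, g continuous at 0 and g differentiable with bounded derivative near 0. Then the Laplace transform F(u) = ∫_0^∞ f(τ) e^{−uτ} dτ satisfies F(u) = g(0) Γ(1+λ) u^{−λ−1} + O(u^{−λ−2}) as u → +∞ along the real axis. -/
/-!
Split off the model term: `f(τ) = g(0) τ^λ + ψ(τ)`. The Laplace transform of `τ^λ` is exactly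
`Γ(1+λ) u^{-λ-1}`, and the mean value theorem gives `‖ψ(τ)‖ ≤ M τ^{Re λ + 1}` on some `(0, δ)`.
On `(0, δ)` the Laplace integral of `ψ` is then at most `M Γ(Re λ + 2) u^{-Re λ - 2}`, while on
`(δ, ∞)` it is `O(e^{-δu})`, which is negligible against any power of `u`.
-/

open MeasureTheory Filter Set
open Topology Asymptotics

lemma norm_exp_neg_ofReal_mul (u τ : ℝ) :
    ‖Complex.exp (-(u : ℂ) * τ)‖ = Real.exp (-(u * τ)) := by
  rw [Complex.norm_exp, neg_mul]
  norm_cast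

lemma integrableOn_rpow_mul_exp_neg_mul {p u : ℝ} (hp : -1 < p) (hu : 0 < u) :
    IntegrableOn (fun t : ℝ => t ^ p * Real.exp (-(u * t))) (Ioi 0) := by
  simpa [neg_mul] using integrableOn_rpow_mul_exp_neg_mul_rpow hp one_pos hu

lemma integrableOn_cpow_mul_exp_neg_mul {lam : ℂ} {u : ℝ} (hlam : -1 < lam.re) (hu : 0 < u) :
    IntegrableOn (fun t : ℝ => (t : ℂ) ^ lam * Complex.exp (-(u : ℂ) * t)) (Ioi 0) := by
  refine (integrableOn_rpow_mul_exp_neg_mul hlam hu).mono' ?_ ?_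
  · refine ContinuousOn.aestronglyMeasurable (fun t ht => ?_) measurableSet_Ioi
    exact ((continuousAt_cpow_const (Complex.ofReal_mem_slitPlane.2 ht)).comp
      Complex.continuous_ofReal.continuousAt |>.mul (by fun_prop)).continuousWithinAt
  · filter_upwards [ae_restrict_mem measurableSet_Ioi] with t ht
    rw [norm_mul, Complex.norm_cpow_eq_rpow_re_of_pos ht, norm_exp_neg_ofReal_mul]

lemma integral_cpow_mul_exp_neg_mul_Ioi_eq_Gamma_mul_cpow {lam : ℂ} {u : ℝ}
    (hlam : -1 < lam.re) (hu : 0 < u) :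
    ∫ t in Ioi (0 : ℝ), (t : ℂ) ^ lam * Complex.exp (-(u : ℂ) * t)
      = Complex.Gamma (1 + lam) * (u : ℂ) ^ (-lam - 1) := by
  have h := Complex.integral_cpow_mul_exp_neg_mul_Ioi (a := 1 + lam)
    (by rw [Complex.add_re, Complex.one_re]; linarith) hu
  have harg : (u : ℂ).arg ≠ Real.pi := by
    rw [Complex.arg_ofReal_of_nonneg hu.le]
    exact Real.pi_ne_zero.symm
  rw [add_sub_cancel_left, one_div, Complex.inv_cpow _ _ harg, ← Complex.cpow_neg,
    neg_add'] at h
  simp_rw [neg_mul]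
  rw [h, mul_comm]
  congr 2
  ring

lemma IntegrableOn.mul_exp_neg_of_le {φ : ℝ → ℂ} {c u : ℝ} (hcu : c ≤ u)
    (hφ : IntegrableOn (fun τ => φ τ * Complex.exp (-(c : ℂ) * τ)) (Ioi 0)) :
    IntegrableOn (fun τ => φ τ * Complex.exp (-(u : ℂ) * τ)) (Ioi 0) := by
  have hbdd : ∀ᵐ τ : ℝ ∂volume.restrict (Ioi 0),
      ‖Complex.exp (-((u - c : ℝ) : ℂ) * τ)‖ ≤ 1 := by
    filter_upwards [ae_restrict_mem measurableSet_Ioi] with τ hτ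
    rw [norm_exp_neg_ofReal_mul, Real.exp_le_one_iff, neg_nonpos]
    exact mul_nonneg (sub_nonneg.2 hcu) (le_of_lt hτ)
  refine (hφ.mul_bdd (Continuous.aestronglyMeasurable (by fun_prop)) hbdd).congr
    (Eventually.of_forall fun τ => ?_)
  simp only [mul_assoc, ← Complex.exp_add]
  congr 2
  push_cast
  ring

lemma norm_sub_le_of_norm_deriv_le_of_continuousAt {E : Type*} [NormedAddCommGroup E]
    [NormedSpace ℝ E] {g : ℝ → E} {a b M : ℝ} (hg : ContinuousAt g a)
    (hd : ∀ x ∈ Ioo a b, DifferentiableAt ℝ g x) (hbound : ∀ x ∈ Ioo a b, ‖deriv g x‖ ≤ M)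
    {x : ℝ} (hx : x ∈ Ioo a b) : ‖g x - g a‖ ≤ M * (x - a) := by
  have hlim : Tendsto (fun y => ‖g x - g y‖) (𝓝[>] a) (𝓝 ‖g x - g a‖) :=
    (tendsto_const_nhds.sub (hg.tendsto.mono_left nhdsWithin_le_nhds)).norm
  have hlim' : Tendsto (fun y => M * (x - y)) (𝓝[>] a) (𝓝 (M * (x - a))) :=
    ((continuous_const.mul (continuous_const.sub continuous_id)).tendsto a).mono_left
      nhdsWithin_le_nhds
  refine le_of_tendsto_of_tendsto hlim hlim' ?_
  filter_upwards [Ioo_mem_nhdsGT hx.1] with y hy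
  have hmvt := (convex_Ioo a b).norm_image_sub_le_of_norm_deriv_le hd hbound
    ⟨hy.1, hy.2.trans hx.2⟩ hx
  rwa [Real.norm_of_nonneg (sub_nonneg.2 hy.2.le)] at hmvt

lemma isBigO_cpow_mul_sub_nhdsGT {g : ℝ → ℂ} {lam : ℂ} {δ M : ℝ} (hδ : 0 < δ)
    (hg : ContinuousAt g 0) (hd : ∀ x ∈ Ioo 0 δ, DifferentiableAt ℝ g x)
    (hbound : ∀ x ∈ Ioo 0 δ, ‖deriv g x‖ ≤ M) :
    (fun τ : ℝ => (τ : ℂ) ^ lam * (g τ - g 0)) =O[𝓝[>] 0] fun τ => τ ^ (lam.re + 1) := by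
  refine IsBigO.of_bound M ?_
  filter_upwards [Ioo_mem_nhdsGT hδ] with τ hτ
  have hlip := norm_sub_le_of_norm_deriv_le_of_continuousAt hg hd hbound hτ
  rw [sub_zero] at hlip
  rw [norm_mul, Complex.norm_cpow_eq_rpow_re_of_pos hτ.1,
    Real.norm_of_nonneg (Real.rpow_nonneg hτ.1.le _), Real.rpow_add_one hτ.1.ne']
  calc τ ^ lam.re * ‖g τ - g 0‖ ≤ τ ^ lam.re * (M * τ) :=
        mul_le_mul_of_nonneg_left hlip (Real.rpow_nonneg hτ.1.le _)
    _ = M * (τ ^ lam.re * τ) := by ring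

lemma norm_setIntegral_mul_exp_neg_le {φ : ℝ → ℂ} {S : Set ℝ} {s M u : ℝ}
    (hS : MeasurableSet S) (hS0 : S ⊆ Ioi 0) (hs : -1 < s) (hM : 0 ≤ M) (hu : 0 < u)
    (hφ : ∀ τ ∈ S, ‖φ τ‖ ≤ M * τ ^ s) :
    ‖∫ τ in S, φ τ * Complex.exp (-(u : ℂ) * τ)‖ ≤ M * Real.Gamma (s + 1) * u ^ (-(s + 1)) := by
  have hint := integrableOn_rpow_mul_exp_neg_mul hs hu
  calc ‖∫ τ in S, φ τ * Complex.exp (-(u : ℂ) * τ)‖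
      ≤ ∫ τ in S, M * (τ ^ s * Real.exp (-(u * τ))) := by
        refine norm_integral_le_of_norm_le ((hint.mono_set hS0).const_mul M) ?_
        filter_upwards [ae_restrict_mem hS] with τ hτ
        rw [norm_mul, norm_exp_neg_ofReal_mul, ← mul_assoc]
        exact mul_le_mul_of_nonneg_right (hφ τ hτ) (Real.exp_pos _).le
    _ ≤ M * ∫ τ in Ioi 0, τ ^ s * Real.exp (-(u * τ)) := by
        rw [integral_const_mul]
        refine mul_le_mul_of_nonneg_left (setIntegral_mono_set hint ?_ hS0.eventuallyLE) hM
        filter_upwards [ae_restrict_mem measurableSet_Ioi] with τ hτ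
        exact mul_nonneg (Real.rpow_nonneg (le_of_lt hτ) _) (Real.exp_pos _).le
    _ = M * Real.Gamma (s + 1) * u ^ (-(s + 1)) := by
        have h := Real.integral_rpow_mul_exp_neg_mul_Ioi (a := s + 1) (by linarith) hu
        rw [add_sub_cancel_right, one_div, Real.inv_rpow hu.le, ← Real.rpow_neg hu.le] at h
        rw [h]
        ring

lemma isBigO_setIntegral_Ioi_mul_exp_neg {φ : ℝ → ℂ} {δ c : ℝ}
    (hφ : IntegrableOn (fun τ => φ τ * Complex.exp (-(c : ℂ) * τ)) (Ioi δ)) :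
    (fun u : ℝ => ∫ τ in Ioi δ, φ τ * Complex.exp (-(u : ℂ) * τ))
      =O[atTop] fun u => Real.exp (-δ * u) := by
  set K := ∫ τ in Ioi δ, ‖φ τ * Complex.exp (-(c : ℂ) * τ)‖
  refine IsBigO.of_bound (Real.exp (c * δ) * K) ?_
  filter_upwards [eventually_ge_atTop c] with u hu
  have hpt : ∀ τ ∈ Ioi δ, ‖φ τ * Complex.exp (-(u : ℂ) * τ)‖
      ≤ Real.exp (-((u - c) * δ)) * ‖φ τ * Complex.exp (-(c : ℂ) * τ)‖ := by
    intro τ hτ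
    have hsplit : Complex.exp (-(u : ℂ) * τ)
        = Complex.exp (-(c : ℂ) * τ) * Complex.exp (-((u - c : ℝ) : ℂ) * τ) := by
      rw [← Complex.exp_add]; congr 1; push_cast; ring
    rw [hsplit, ← mul_assoc, norm_mul _ (Complex.exp _), norm_exp_neg_ofReal_mul, mul_comm]
    gcongr
    exact le_of_lt hτ
  calc ‖∫ τ in Ioi δ, φ τ * Complex.exp (-(u : ℂ) * τ)‖
      ≤ ∫ τ in Ioi δ, Real.exp (-((u - c) * δ)) * ‖φ τ * Complex.exp (-(c : ℂ) * τ)‖ :=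
        norm_integral_le_of_norm_le (hφ.norm.const_mul _)
          ((ae_restrict_iff' measurableSet_Ioi).2 (Eventually.of_forall hpt))
    _ = Real.exp (c * δ) * K * ‖Real.exp (-δ * u)‖ := by
        rw [integral_const_mul, Real.norm_of_nonneg (Real.exp_pos _).le, mul_right_comm,
          ← Real.exp_add]
        congr 2
        ring

noncomputable def laplaceTransform (φ : ℝ → ℂ) (u : ℝ) : ℂ :=
  ∫ τ in Ioi 0, φ τ * Complex.exp (-(u : ℂ) * τ)

lemma integrableOn_sub_cpow_mul_mul_exp_neg {f : ℝ → ℂ} {lam a : ℂ} {u : ℝ}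
    (hlam : -1 < lam.re) (hu : 0 < u)
    (hf : IntegrableOn (fun τ => f τ * Complex.exp (-(u : ℂ) * τ)) (Ioi 0)) :
    IntegrableOn (fun τ => (f τ - (τ : ℂ) ^ lam * a) * Complex.exp (-(u : ℂ) * τ)) (Ioi 0) :=
  (hf.sub ((integrableOn_cpow_mul_exp_neg_mul hlam hu).mul_const a)).congr_fun
    (fun τ _ => by simp only [Pi.sub_apply]; ring) measurableSet_Ioi

lemma laplaceTransform_sub_cpow_mul {f : ℝ → ℂ} {lam a : ℂ} {u : ℝ}
    (hlam : -1 < lam.re) (hu : 0 < u)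
    (hf : IntegrableOn (fun τ => f τ * Complex.exp (-(u : ℂ) * τ)) (Ioi 0)) :
    laplaceTransform (fun τ => f τ - (τ : ℂ) ^ lam * a) u
      = laplaceTransform f u - a * Complex.Gamma (1 + lam) * (u : ℂ) ^ (-lam - 1) := by
  rw [mul_assoc, ← integral_cpow_mul_exp_neg_mul_Ioi_eq_Gamma_mul_cpow hlam hu,
    ← integral_const_mul, laplaceTransform, laplaceTransform,
    ← integral_sub hf ((integrableOn_cpow_mul_exp_neg_mul hlam hu).const_mul a)]
  congr 1 with τ
  ring

theorem laplaceTransform_isBigO_rpow {φ : ℝ → ℂ} {s c : ℝ} (hs : -1 < s)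
    (hφ0 : φ =O[𝓝[>] 0] fun τ => τ ^ s)
    (hφc : IntegrableOn (fun τ => φ τ * Complex.exp (-(c : ℂ) * τ)) (Ioi 0)) :
    laplaceTransform φ =O[atTop] fun u => u ^ (-(s + 1)) := by
  obtain ⟨M, hM, hMφ⟩ := hφ0.exists_nonneg
  obtain ⟨δ, hδ, hδφ⟩ := mem_nhdsGT_iff_exists_Ioo_subset.1 hMφ.bound
  have hnear : (fun u : ℝ => ∫ τ in Ioo 0 δ, φ τ * Complex.exp (-(u : ℂ) * τ))
      =O[atTop] fun u => u ^ (-(s + 1)) := by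
    refine IsBigO.of_bound (M * Real.Gamma (s + 1)) ?_
    filter_upwards [eventually_gt_atTop 0] with u hu
    rw [Real.norm_of_nonneg (Real.rpow_nonneg hu.le _)]
    refine norm_setIntegral_mul_exp_neg_le measurableSet_Ioo Ioo_subset_Ioi_self hs hM hu
      fun τ hτ => ?_
    have h : ‖φ τ‖ ≤ M * ‖τ ^ s‖ := hδφ hτ
    rwa [Real.norm_of_nonneg (Real.rpow_nonneg hτ.1.le s)] at h
  have hfar := (isBigO_setIntegral_Ioi_mul_exp_neg (hφc.mono_set (Ioi_subset_Ioi hδ.le))).trans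
    (isLittleO_exp_neg_mul_rpow_atTop hδ (-(s + 1))).isBigO
  refine (hnear.add hfar).congr' ?_ EventuallyEq.rfl
  filter_upwards [eventually_ge_atTop c] with u hu
  have hint := IntegrableOn.mul_exp_neg_of_le hu hφc
  symm
  rw [laplaceTransform, ← Ioc_union_Ioi_eq_Ioi hδ.le, setIntegral_union Ioc_disjoint_Ioi_same
    measurableSet_Ioi (hint.mono_set Ioc_subset_Ioi_self) (hint.mono_set (Ioi_subset_Ioi hδ.le)),
    integral_Ioc_eq_integral_Ioo]

/-- Watson's Lemma, first order: if `f(τ) = τ^λ g(τ)` with `Re λ > −1`, `f`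
absolutely integrable on `(0,∞)`, `g` continuous at `0` and differentiable with
bounded derivative near `0`, then
`∫_0^∞ f(τ) e^{−uτ} dτ = g(0) Γ(1+λ) u^{−λ−1} + O(u^{−λ−2})` as `u → +∞`. -/
theorem stmt_9 (f g : ℝ → ℂ) (lam : ℂ) (hlam : -1 < lam.re)
    (hf : IntegrableOn f (Ioi 0))
    (hfg : ∀ τ : ℝ, 0 < τ → f τ = (τ : ℂ) ^ lam * g τ)
    (hg : ContinuousAt g 0)
    (hg' : ∃ δ > (0:ℝ), ∃ M : ℝ, ∀ τ ∈ Ioo (0:ℝ) δ,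
        DifferentiableAt ℝ g τ ∧ ‖deriv g τ‖ ≤ M) :
    ∃ C : ℝ, ∀ᶠ u : ℝ in atTop,
      ‖(∫ τ in Ioi (0:ℝ), f τ * Complex.exp (-(u : ℂ) * τ)) -
          g 0 * Complex.Gamma (1 + lam) * (u : ℂ) ^ (-lam - 1)‖ ≤
        C * u ^ (-lam.re - 2) := by
  obtain ⟨δ, hδ, M, hM⟩ := hg'
  have hremainder : (fun τ => f τ - (τ : ℂ) ^ lam * g 0) =O[𝓝[>] 0]
      fun τ => τ ^ (lam.re + 1) :=
    (isBigO_cpow_mul_sub_nhdsGT hδ hg (fun x hx => (hM x hx).1) (fun x hx => (hM x hx).2)).congr'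
      (eventually_mem_nhdsWithin.mono fun τ hτ => by dsimp only; rw [hfg τ hτ, mul_sub])
      EventuallyEq.rfl
  have hfE : ∀ u : ℝ, 0 < u →
      IntegrableOn (fun τ => f τ * Complex.exp (-(u : ℂ) * τ)) (Ioi 0) :=
    fun u hu => IntegrableOn.mul_exp_neg_of_le hu.le (by simpa using hf)
  obtain ⟨C, hC⟩ := (laplaceTransform_isBigO_rpow (by linarith) hremainder
    (integrableOn_sub_cpow_mul_mul_exp_neg hlam one_pos (hfE 1 one_pos))).bound
  refine ⟨C, ?_⟩
  filter_upwards [hC, eventually_gt_atTop 0] with u hCu hu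
  rwa [laplaceTransform_sub_cpow_mul hlam hu (hfE u hu), Real.norm_of_nonneg (by positivity),
    show -(lam.re + 1 + 1) = -lam.re - 2 by ring] at hCu
end

section
/- Let d, w_1, …, w_N be positive integers with r = ∑_j w_j − d > 0 (Fano case) and set q_j = w_j/d. The regularized FJRW series with coefficients c_{k,l} = (1/Γ(1 + r(dl+k+1)/d)) · (1/(dl+k)!) · ∏_{j=1}^N Γ(q_j(dl+k+1))/Γ(q_j + ⟨q_j k⟩), summed over narrow k and l ≥ 0 with term τ^{r(l+(k+1)/d)}, converges absolutely for |τ|^r < r^r d^d ∏_{j=1}^N w_j^{−w_j}. -/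
open scoped BigOperators

open Finset Filter Topology

lemma gamma_add_nat' {s : ℝ} (hs : 0 < s) (n : ℕ) :
    Real.Gamma (s + n) = Real.Gamma s * ∏ i ∈ Finset.range n, (s + i) := by
  induction n with
  | zero => simp
  | succ n ih =>
    have h : s + ((n : ℝ) + 1) = (s + n) + 1 := by ring
    push_cast
    rw [h, Real.Gamma_add_one (by positivity), ih, Finset.prod_range_succ]
    ring

lemma ratio_aux (c xr P Q U : ℝ) (hc : c ≠ 0) (hP : P ≠ 0) (hQ : Q ≠ 0) (rr dd : ℕ) :
    xr * (P / c ^ rr)⁻¹ * (Q / c ^ dd)⁻¹ * (U / c ^ (rr + dd)) = xr * P⁻¹ * Q⁻¹ * U := by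
  field_simp
  ring

lemma tendsto_affine (a b : ℝ) :
    Tendsto (fun l : ℕ => (a * l + b) / l) atTop (𝓝 a) := by
  have h1 : Tendsto (fun l : ℕ => a + b * ((l : ℝ))⁻¹) atTop (𝓝 (a + b * 0)) :=
    (tendsto_const_nhds.add (tendsto_const_nhds.mul
      (tendsto_natCast_atTop_atTop (R := ℝ)).inv_tendsto_atTop))
  rw [mul_zero, add_zero] at h1
  refine h1.congr' ?_
  filter_upwards [eventually_ge_atTop 1] with l hl
  have h0 : (l : ℝ) ≠ 0 := Nat.cast_ne_zero.mpr (by omega)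
  field_simp

/-- Fano case `r = ∑ w_j − d > 0`: for each narrow `k`, the regularized FJRW
series with coefficients
`c_{k,l} = Γ(1 + r(dl+k+1)/d)⁻¹ (dl+k)!⁻¹ ∏_j Γ(q_j(dl+k+1))/Γ(q_j + ⟨q_j k⟩)`
and terms `τ^{r(l+(k+1)/d)}` converges absolutely for
`|τ|^r < r^r d^d ∏_j w_j^{−w_j}`. -/
theorem stmt_13 (N d : ℕ) (hd : 0 < d) (w : Fin N → ℕ) (hw : ∀ j, 0 < w j)
    (r : ℕ) (hr : r = (∑ j, w j) - d) (hrpos : d < ∑ j, w j)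
    (k : ℕ) (hk : k < d) (hnar : ∀ j, ¬ (d ∣ (k + 1) * w j))
    (x : ℝ) (hx : 0 ≤ x)
    (hlt : x ^ r < (r : ℝ) ^ r * (d : ℝ) ^ d * ∏ j, ((w j : ℝ) ^ (w j))⁻¹) :
    Summable (fun l : ℕ =>
      (1 / Real.Gamma (1 + r * (d * l + k + 1) / d)) *
        (1 / ((d * l + k).factorial : ℝ)) *
        (∏ j, Real.Gamma ((w j : ℝ) / d * (d * l + k + 1)) /
            Real.Gamma ((w j : ℝ) / d + Int.fract ((w j : ℝ) / d * k))) *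
        x ^ ((r : ℝ) * (l + (k + 1) / d))) := by
  have hrn : 0 < r := by omega
  have hsum : (∑ j, w j) = r + d := by omega
  have hdR : (0:ℝ) < d := by exact_mod_cast hd
  have hdne : (d:ℝ) ≠ 0 := ne_of_gt hdR
  have hrR : (0:ℝ) < r := by exact_mod_cast hrn
  set f : ℕ → ℝ := fun l =>
      (1 / Real.Gamma (1 + r * (d * l + k + 1) / d)) *
        (1 / ((d * l + k).factorial : ℝ)) *
        (∏ j, Real.Gamma ((w j : ℝ) / d * (d * l + k + 1)) /
            Real.Gamma ((w j : ℝ) / d + Int.fract ((w j : ℝ) / d * k))) *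
        x ^ ((r : ℝ) * (l + (k + 1) / d)) with hf
  -- case x = 0
  rcases eq_or_lt_of_le hx with hx0 | hxpos
  · have hz : f = fun _ => 0 := by
      funext l
      have he : (r : ℝ) * (l + (k + 1) / d) ≠ 0 := by positivity
      simp [hf, ← hx0, Real.zero_rpow he]
    rw [hz]; exact summable_zero
  -- notation
  set z : ℕ → ℝ := fun l => 1 + r * (d * l + k + 1) / d with hz
  set y : ℕ → ℝ := fun l => d * l + k + 1 with hy
  set u : Fin N → ℕ → ℝ := fun j l => (w j : ℝ) / d * (d * l + k + 1) with hu
  have hzpos : ∀ l, 0 < z l := fun l => by simp only [hz]; positivity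
  have hypos : ∀ l, 0 < y l := fun l => by simp only [hy]; positivity
  have hupos : ∀ j l, 0 < u j l := fun j l => by
    have : (0:ℝ) < w j := by exact_mod_cast hw j
    simp only [hu]; positivity
  -- positivity of terms
  have fpos : ∀ l, 0 < f l := by
    intro l
    have h1 : 0 < Real.Gamma (1 + r * (d * l + k + 1) / d) :=
      Real.Gamma_pos_of_pos (hzpos l)
    have h2 : (0:ℝ) < (d * l + k).factorial := by positivity
    have h3 : ∀ j : Fin N, 0 < Real.Gamma ((w j : ℝ) / d * (d * l + k + 1)) /
        Real.Gamma ((w j : ℝ) / d + Int.fract ((w j : ℝ) / d * k)) := by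
      intro j
      have hwj : (0:ℝ) < w j := by exact_mod_cast hw j
      apply div_pos (Real.Gamma_pos_of_pos (hupos j l))
      apply Real.Gamma_pos_of_pos
      have := Int.fract_nonneg ((w j : ℝ) / d * k)
      have : (0:ℝ) < (w j : ℝ) / d := by positivity
      linarith [Int.fract_nonneg ((w j : ℝ) / d * k)]
    have h4 : 0 < x ^ ((r : ℝ) * (l + (k + 1) / d)) := Real.rpow_pos_of_pos hxpos _
    exact mul_pos (mul_pos (mul_pos (by positivity) (by positivity))
      (Finset.prod_pos fun j _ => h3 j)) h4
  have fne : ∀ l, f l ≠ 0 := fun l => ne_of_gt (fpos l)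
  -- the ratio
  set R : ℕ → ℝ := fun l =>
      x ^ r * (∏ i ∈ range r, (z l + i))⁻¹ * (∏ i ∈ range d, (y l + i))⁻¹ *
        ∏ j, ∏ i ∈ range (w j), (u j l + i) with hR
  have key : ∀ l, f (l + 1) = f l * R l := by
    intro l
    have e1 : (1:ℝ) + r * (d * (l+1 : ℕ) + k + 1) / d = z l + r := by
      simp only [hz]; push_cast; field_simp; ring
    have e2 : (d * (l+1) + k).factorial = (((d * l + k) + d)).factorial := by
      congr 1; ring
    have e3 : (((d * l + k) + d).factorial : ℝ)
        = ((d * l + k).factorial : ℝ) * ∏ i ∈ range d, (y l + i) := by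
      have := gamma_add_nat' (s := ((d * l + k : ℕ) : ℝ) + 1) (by positivity) d
      rw [show (((d * l + k : ℕ) : ℝ) + 1) + (d : ℝ) = ((((d * l + k) + d : ℕ)) : ℝ) + 1 by
        push_cast; ring] at this
      rw [Real.Gamma_nat_eq_factorial, Real.Gamma_nat_eq_factorial] at this
      rw [this]
      congr 1
      apply Finset.prod_congr rfl
      intro i _
      simp only [hy]; push_cast; ring
    have e4 : ∀ j : Fin N, (w j : ℝ) / d * (d * (l+1:ℕ) + k + 1) = u j l + w j := by
      intro j; simp only [hu]; push_cast; field_simp; ring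
    have e5 : x ^ ((r:ℝ) * ((l+1:ℕ) + (k + 1) / d))
        = x ^ ((r:ℝ) * (l + (k + 1) / d)) * x ^ r := by
      rw [← Real.rpow_natCast x r, ← Real.rpow_add hxpos]
      congr 1; push_cast; ring
    simp only [hf, e1, e2, e3, e5]
    rw [gamma_add_nat' (hzpos l) r]
    have e6 : (∏ j, Real.Gamma ((w j : ℝ) / d * (d * (l+1:ℕ) + k + 1)) /
            Real.Gamma ((w j : ℝ) / d + Int.fract ((w j : ℝ) / d * k)))
        = (∏ j, Real.Gamma ((w j : ℝ) / d * (d * (l:ℕ) + k + 1)) /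
            Real.Gamma ((w j : ℝ) / d + Int.fract ((w j : ℝ) / d * k)))
          * ∏ j, ∏ i ∈ range (w j), (u j l + i) := by
      rw [← Finset.prod_mul_distrib]
      apply Finset.prod_congr rfl
      intro j _
      rw [e4 j, gamma_add_nat' (hupos j l) (w j)]
      rw [show (w j : ℝ) / d * (d * (l:ℕ) + k + 1) = u j l from rfl]
      ring
    rw [e6]
    simp only [hR]
    have hG : Real.Gamma (z l) ≠ 0 := ne_of_gt (Real.Gamma_pos_of_pos (hzpos l))
    have hZ : (∏ i ∈ range r, (z l + i)) ≠ 0 := by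
      apply ne_of_gt; apply Finset.prod_pos; intro i _
      have := hzpos l; positivity
    have hY : (∏ i ∈ range d, (y l + i)) ≠ 0 := by
      apply ne_of_gt; apply Finset.prod_pos; intro i _
      have := hypos l; positivity
    have hF : ((d * l + k).factorial : ℝ) ≠ 0 := by positivity
    simp only [one_div, mul_inv]
    ring
  -- the limit value
  set W : ℝ := ∏ j, (w j : ℝ) ^ (w j) with hW
  have hWpos : 0 < W := by
    apply Finset.prod_pos; intro j _
    have : (0:ℝ) < w j := by exact_mod_cast hw j
    positivity
  set L : ℝ := x ^ r * ((r:ℝ) ^ r)⁻¹ * ((d:ℝ) ^ d)⁻¹ * W with hL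
  have hrr : (0:ℝ) < (r:ℝ) ^ r := by positivity
  have hdd : (0:ℝ) < (d:ℝ) ^ d := by positivity
  have hL1 : L < 1 := by
    rw [Finset.prod_inv_distrib, ← hW] at hlt
    have h2 : x ^ r * W < (r:ℝ) ^ r * (d:ℝ) ^ d := by
      have := mul_lt_mul_of_pos_right hlt hWpos
      rwa [mul_assoc, inv_mul_cancel₀ (ne_of_gt hWpos), mul_one] at this
    have hLe : L = (x ^ r * W) / ((r:ℝ) ^ r * (d:ℝ) ^ d) := by
      rw [hL]; field_simp
    rw [hLe, div_lt_one (by positivity)]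
    exact h2
  -- norm ratio equals R
  have hnorm : ∀ l, ‖f (l + 1)‖ / ‖f l‖ = R l := by
    intro l
    rw [Real.norm_eq_abs, Real.norm_eq_abs, abs_of_pos (fpos _), abs_of_pos (fpos _),
      key l, mul_div_cancel_left₀ _ (fne l)]
  -- tendsto of the rescaled factors
  have hBt : Tendsto (fun l : ℕ => ∏ i ∈ range r, ((z l + i) / l)) atTop
      (𝓝 ((r:ℝ) ^ r)) := by
    have := tendsto_finset_prod (f := fun (i : ℕ) (l : ℕ) => (z l + i) / l)
      (a := fun _ => (r:ℝ)) (range r) (fun i _ => by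
        refine Tendsto.congr (fun l => ?_) (tendsto_affine (r:ℝ) (1 + r * (k+1)/d + i))
        congr 1
        simp only [hz]; field_simp; ring)
    simpa [Finset.prod_const] using this
  have hCt : Tendsto (fun l : ℕ => ∏ i ∈ range d, ((y l + i) / l)) atTop
      (𝓝 ((d:ℝ) ^ d)) := by
    have := tendsto_finset_prod (f := fun (i : ℕ) (l : ℕ) => (y l + i) / l)
      (a := fun _ => (d:ℝ)) (range d) (fun i _ => by
        refine Tendsto.congr (fun l => ?_) (tendsto_affine (d:ℝ) ((k:ℝ) + 1 + i))
        congr 1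
        simp only [hy]; ring)
    simpa [Finset.prod_const] using this
  have hAt : Tendsto (fun l : ℕ => ∏ j, ∏ i ∈ range (w j), ((u j l + i) / l)) atTop
      (𝓝 W) := by
    have := tendsto_finset_prod
      (f := fun (j : Fin N) (l : ℕ) => ∏ i ∈ range (w j), ((u j l + i) / l))
      (a := fun j => (w j : ℝ) ^ (w j)) Finset.univ (fun j _ => by
        have := tendsto_finset_prod (f := fun (i : ℕ) (l : ℕ) => (u j l + i) / l)
          (a := fun _ => (w j : ℝ)) (range (w j)) (fun i _ => by
            refine Tendsto.congr (fun l => ?_) (tendsto_affine ((w j):ℝ)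
              ((w j : ℝ) * (k+1)/d + i))
            congr 1
            simp only [hu]; field_simp; ring)
        simpa [Finset.prod_const] using this)
    simpa [hW] using this
  -- combined tendsto of R
  have hRt : Tendsto R atTop (𝓝 L) := by
    have hT : Tendsto (fun l : ℕ => x ^ r * (∏ i ∈ range r, ((z l + i) / l))⁻¹ *
        (∏ i ∈ range d, ((y l + i) / l))⁻¹ *
        ∏ j, ∏ i ∈ range (w j), ((u j l + i) / l)) atTop (𝓝 L) := by
      rw [hL]
      exact ((tendsto_const_nhds.mul (hBt.inv₀ (ne_of_gt hrr))).mul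
        (hCt.inv₀ (ne_of_gt hdd))).mul hAt
    refine hT.congr' ?_
    filter_upwards [eventually_ge_atTop 1] with l hl
    have hlne : ((l:ℝ)) ≠ 0 := Nat.cast_ne_zero.mpr (by omega)
    have eB : (∏ i ∈ range r, ((z l + i) / l))
        = (∏ i ∈ range r, (z l + i)) / (l:ℝ) ^ r := by
      rw [Finset.prod_div_distrib, Finset.prod_const, Finset.card_range]
    have eC : (∏ i ∈ range d, ((y l + i) / l))
        = (∏ i ∈ range d, (y l + i)) / (l:ℝ) ^ d := by
      rw [Finset.prod_div_distrib, Finset.prod_const, Finset.card_range]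
    have eA : (∏ j, ∏ i ∈ range (w j), ((u j l + i) / l))
        = (∏ j, ∏ i ∈ range (w j), (u j l + i)) / (l:ℝ) ^ (r + d) := by
      rw [← hsum]
      rw [← Finset.prod_pow_eq_pow_sum, ← Finset.prod_div_distrib]
      apply Finset.prod_congr rfl
      intro j _
      rw [Finset.prod_div_distrib, Finset.prod_const, Finset.card_range]
    rw [eB, eC, eA, hR]
    have hZ : (∏ i ∈ range r, (z l + i)) ≠ 0 := by
      apply ne_of_gt; apply Finset.prod_pos; intro i _
      have := hzpos l; positivity
    have hY : (∏ i ∈ range d, (y l + i)) ≠ 0 := by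
      apply ne_of_gt; apply Finset.prod_pos; intro i _
      have := hypos l; positivity
    exact ratio_aux (l:ℝ) (x ^ r) _ _ _ hlne hZ hY r d
  exact summable_of_ratio_test_tendsto_lt_one hL1 (Eventually.of_forall fne)
    (hRt.congr fun l => (hnorm l).symm)
end

section
/- For the degree-3 del Pezzo recursion a_1 = (7/243) a_0 and 3^6 (n+2) a_{n+2} = (54 n^2 + 162 n + 129) a_{n+1} − (n+1)^3 a_n for n ≥ 0, with a_0 = 1: the sequence (a_n) is uniquely determined, and the formal series I(q) = q^{−1} e^{27 q} ∑_{n≥0} a_n q^{−n} formally satisfies (q d/dq)^3 I = 3q (3 q d/dq + 2)(3 q d/dq + 1) I, in the sense that substituting the ansatz and equating coefficients of each power of q (after factoring out e^{27q}) reproduces exactly the given recursion. -/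
/-- The action of `D = q d/dq` on coefficient sequences of formal expressions
`e^{27q} ∑_k c_k q^k`: since `D(q^m e^{27q}) = (m q^m + 27 q^{m+1}) e^{27q}`,
one has `(Dc)_k = k c_k + 27 c_{k−1}`. -/
noncomputable def Dq (c : ℤ → ℝ) : ℤ → ℝ := fun k => (k : ℝ) * c k + 27 * c (k - 1)

/-- The degree-3 del Pezzo recursion: `a_0 = 1`, `a_1 = (7/243) a_0`, and
`3^6 (n+2) a_{n+2} = (54 n² + 162 n + 129) a_{n+1} − (n+1)³ a_n`. -/
def delPezzoRec (a : ℕ → ℝ) : Prop :=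
  a 0 = 1 ∧ a 1 = 7 / 243 * a 0 ∧
    ∀ n : ℕ, 729 * ((n : ℝ) + 2) * a (n + 2) =
      (54 * (n : ℝ) ^ 2 + 162 * (n : ℝ) + 129) * a (n + 1) - ((n : ℝ) + 1) ^ 3 * a n

/-- Key algebraic simplification: the termwise ODE equation at index `k`
reduces to a three-term relation (the `c (k-3)` contributions cancel). -/
lemma dq_expand (c : ℤ → ℝ) (k : ℤ) :
    (Dq (Dq (Dq c)) k =
        3 * ((fun g l => 3 * Dq g l + 2 * g l)
              ((fun g l => 3 * Dq g l + 1 * g l) c)) (k - 1)) ↔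
    ((k : ℝ) ^ 3 * c k + (54 * (k : ℝ) ^ 2 - 54 * (k : ℝ) + 21) * c (k - 1)
        + (729 * (k : ℝ) - 729) * c (k - 2) = 0) := by
  simp only [Dq, show k - 1 - 1 = k - 2 from by ring, show k - 1 - 1 - 1 = k - 3 from by ring]
  push_cast
  constructor <;> intro h <;> linear_combination h

/-- The sequence `(a_n)` is uniquely determined by the recursion, and the formal
series `I(q) = q^{−1} e^{27q} ∑ a_n q^{−n}` satisfies
`(q d/dq)³ I = 3q (3 q d/dq + 2)(3 q d/dq + 1) I` termwise (equating coefficients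
of each power of `q` after factoring out `e^{27q}`) exactly when the recursion
holds.  Here the coefficient sequence is `c_{−1−n} = a_n`, `c_k = 0` for `k ≥ 0`,
and multiplication by `3q` shifts coefficient indices by one. -/
theorem stmt_18 :
    (∀ a b : ℕ → ℝ, delPezzoRec a → delPezzoRec b → a = b) ∧
    (∀ a : ℕ → ℝ, a 0 = 1 →
      ∀ c : ℤ → ℝ, c = (fun k : ℤ => if k ≤ -1 then a (-1 - k).toNat else 0) →
      ((∀ k : ℤ, Dq (Dq (Dq c)) k =
          3 * ((fun g l => 3 * Dq g l + 2 * g l)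
                ((fun g l => 3 * Dq g l + 1 * g l) c)) (k - 1)) ↔
        (a 1 = 7 / 243 * a 0 ∧
          ∀ n : ℕ, 729 * ((n : ℝ) + 2) * a (n + 2) =
            (54 * (n : ℝ) ^ 2 + 162 * (n : ℝ) + 129) * a (n + 1) -
              ((n : ℝ) + 1) ^ 3 * a n))) := by
  constructor
  · -- uniqueness
    intro a b ha hb
    funext n
    induction n using Nat.strong_induction_on with
    | _ n ih =>
      match n with
      | 0 => rw [ha.1, hb.1]
      | 1 => rw [ha.2.1, hb.2.1, ha.1, hb.1]
      | (m + 2) =>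
        have h1 := ha.2.2 m
        have h2 := hb.2.2 m
        rw [ih m (by omega), ih (m + 1) (by omega)] at h1
        have hne : (729 : ℝ) * ((m : ℝ) + 2) ≠ 0 := by positivity
        exact mul_left_cancel₀ hne (h1.trans h2.symm)
  · intro a ha0 c hc
    have cneg : ∀ (n : ℕ) (k : ℤ), k = -1 - n → c k = a n := by
      intro n k hk
      simp only [hc]
      rw [if_pos (show k ≤ -1 by omega)]
      congr 1
      omega
    have cpos : ∀ k : ℤ, 0 ≤ k → c k = 0 := by
      intro k hk
      simp only [hc]
      rw [if_neg (show ¬ k ≤ -1 by omega)]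
    constructor
    · intro H
      constructor
      · have h := (dq_expand c 0).mp (H 0)
        rw [cpos 0 (by omega), cneg 0 (0 - 1) (by ring), cneg 1 (0 - 2) (by norm_num)] at h
        norm_num at h
        linarith
      · intro n
        have h := (dq_expand c (-1 - n)).mp (H (-1 - n))
        rw [cneg n (-1 - (n : ℤ)) rfl, cneg (n + 1) (-1 - (n : ℤ) - 1) (by push_cast; ring),
          cneg (n + 2) (-1 - (n : ℤ) - 2) (by push_cast; ring)] at h
        push_cast at h
        linear_combination -h
    · rintro ⟨h1, h2⟩ k
      rw [dq_expand]
      rcases lt_or_ge k 0 with hk | hk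
      · obtain ⟨n, hn⟩ : ∃ n : ℕ, k = -1 - (n : ℤ) := ⟨(-1 - k).toNat, by omega⟩
        subst hn
        rw [cneg n (-1 - (n : ℤ)) rfl, cneg (n + 1) (-1 - (n : ℤ) - 1) (by push_cast; ring),
          cneg (n + 2) (-1 - (n : ℤ) - 2) (by push_cast; ring)]
        push_cast
        linear_combination -(h2 n)
      · by_cases hk0 : k = 0
        · subst hk0
          rw [cpos 0 (by omega), cneg 0 (0 - 1) (by ring), cneg 1 (0 - 2) (by norm_num)]
          push_cast
          linarith
        · by_cases hk1 : k = 1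
          · subst hk1
            rw [cpos 1 (by omega), cpos (1 - 1) (by omega), cneg 0 (1 - 2) (by ring)]
            push_cast
            ring
          · rw [cpos k (by omega), cpos (k - 1) (by omega), cpos (k - 2) (by omega)]
            ring
end
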